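/- arXiv:1610.09499 — 4 statements merged into one kernel-verified Lean document; each statement's English description precedes it below -/
import Mathlib

section
/- Let P1, P2, P3 : ℝ → ℝ be differentiable solutions of the system P1' = -((γ+1)/4)P1² + (1/4)P1P2 - ((3-γ)/4)P1P3 - (1/4)P2P3, P2' = -((γ+1)/4)P2(P1+P3), P3' = -((γ+1)/4)P3² + (1/4)P1P2 - ((3-γ)/4)P1P3 - (1/4)P2P3. If at some time t₀ one has P2(t₀) = K·(P1(t₀) - P3(t₀)) for a constant K, then P2(t) = K·(P1(t) - P3(t)) for all t (assuming the solutions are defined on an interval containing t₀). -/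
/-!
Since `(P1 - P3)' = -((γ+1)/4) (P1 + P3) (P1 - P3)`, the defect `P2 - K (P1 - P3)` solves the
scalar linear equation `y' = -((γ+1)/4) (P1 + P3) y` with `y t₀ = 0`; its coefficient is
continuous, hence locally bounded, so the right-hand side is Lipschitz in `y` on compact time
intervals and ODE uniqueness forces `y = 0`.
-/

open Set

variable {E : Type*} [NormedAddCommGroup E] [NormedSpace ℝ E]

theorem Set.OrdConnected.eqOn_zero_of_hasDerivAt_smul_self {I : Set ℝ} (hI : I.OrdConnected)
    {a : ℝ → ℝ} (ha : ContinuousOn a I) {f : ℝ → E}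
    (hf : ∀ t ∈ I, HasDerivAt f (a t • f t) t) {t₀ : ℝ} (ht₀ : t₀ ∈ I) (h₀ : f t₀ = 0) :
    EqOn f 0 I := by
  intro t ht
  have hsub : uIcc t₀ t ⊆ I := hI.uIcc_subset ht₀ ht
  obtain ⟨C, hC⟩ := isCompact_uIcc.exists_bound_of_continuousOn (ha.mono hsub)
  have hlip : ∀ u ∈ uIcc t₀ t, LipschitzOnWith C.toNNReal (fun x : E ↦ a u • x) univ :=
    fun u hu ↦ ((lipschitzWith_smul (a u)).weaken
      (by simpa [← NNReal.coe_le_coe] using (hC u hu).trans (le_max_left C 0))).lipschitzOnWith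
  have hcont : ContinuousOn f (uIcc t₀ t) :=
    HasDerivAt.continuousOn fun u hu ↦ hf u (hsub hu)
  have hderiv (u) (hu : u ∈ uIcc t₀ t) {J : Set ℝ} : HasDerivWithinAt f (a u • f u) J u :=
    (hf u (hsub hu)).hasDerivWithinAt
  have hzero (u) {J : Set ℝ} : HasDerivWithinAt (0 : ℝ → E) (a u • (0 : ℝ → E) u) J u := by
    rw [Pi.zero_apply, smul_zero]
    exact hasDerivWithinAt_const u J 0
  rcases le_total t₀ t with h | h
  · rw [uIcc_of_le h] at hlip hcont hderiv
    exact ODE_solution_unique_of_mem_Icc_right (fun u hu ↦ hlip u (Ico_subset_Icc_self hu))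
      hcont (fun u hu ↦ hderiv u (Ico_subset_Icc_self hu)) (fun _ _ ↦ mem_univ _)
      continuousOn_const (fun u _ ↦ hzero u) (fun _ _ ↦ mem_univ _) h₀ ⟨h, le_rfl⟩
  · rw [uIcc_of_ge h] at hlip hcont hderiv
    exact ODE_solution_unique_of_mem_Icc_left (fun u hu ↦ hlip u (Ioc_subset_Icc_self hu))
      hcont (fun u hu ↦ hderiv u (Ioc_subset_Icc_self hu)) (fun _ _ ↦ mem_univ _)
      continuousOn_const (fun u _ ↦ hzero u) (fun _ _ ↦ mem_univ _) h₀ ⟨le_rfl, h⟩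

theorem P2_eq_K_mul_P1_sub_P3 (γ K : ℝ) (P1 P2 P3 : ℝ → ℝ) (I : Set ℝ)
    (hI : I.OrdConnected) (t₀ : ℝ) (ht₀ : t₀ ∈ I)
    (h1 : ∀ t ∈ I, HasDerivAt P1
      (-((γ+1)/4) * (P1 t)^2 + (1/4) * P1 t * P2 t - ((3-γ)/4) * P1 t * P3 t
        - (1/4) * P2 t * P3 t) t)
    (h2 : ∀ t ∈ I, HasDerivAt P2 (-((γ+1)/4) * P2 t * (P1 t + P3 t)) t)
    (h3 : ∀ t ∈ I, HasDerivAt P3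
      (-((γ+1)/4) * (P3 t)^2 + (1/4) * P1 t * P2 t - ((3-γ)/4) * P1 t * P3 t
        - (1/4) * P2 t * P3 t) t)
    (hinit : P2 t₀ = K * (P1 t₀ - P3 t₀)) :
    ∀ t ∈ I, P2 t = K * (P1 t - P3 t) := by
  let a : ℝ → ℝ := fun t ↦ -((γ+1)/4) * (P1 t + P3 t)
  have ha : ContinuousOn a I :=
    continuousOn_const.mul ((HasDerivAt.continuousOn h1).add (HasDerivAt.continuousOn h3))
  have hdefect : ∀ t ∈ I,
      HasDerivAt (fun t ↦ P2 t - K * (P1 t - P3 t)) (a t * (P2 t - K * (P1 t - P3 t))) t := by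
    intro t ht
    refine ((h2 t ht).sub (((h1 t ht).sub (h3 t ht)).const_mul K)).congr_deriv ?_
    ring
  intro t ht
  have := hI.eqOn_zero_of_hasDerivAt_smul_self ha hdefect ht₀ (by simp [hinit]) ht
  simpa [sub_eq_zero] using this
end

section
/- Let γ > 1 and b be real constants, and let R1, R2 : I → ℝ be differentiable on an interval I, with R2 > 0 on I, satisfying R1' = -R1² + b R2² and R2' = -((γ+1)/2) R1 R2. Then the function E(t) = (R1(t)² + (2b/(γ-1)) R2(t)²) · R2(t)^{-4/(γ+1)} is constant on I. -/
open Real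

/-! Along the flow, `R1² + (2b/(γ-1)) R2²` has logarithmic derivative `-2 R1` and
`R2^{-4/(γ+1)}` has logarithmic derivative `2 R1`, so their product has zero derivative and is
constant on the interval. -/

theorem Set.OrdConnected.eq_of_hasDerivAt_eq_zero {E : Type*} [NormedAddCommGroup E]
    [NormedSpace ℝ E] {I : Set ℝ} (hI : I.OrdConnected) {f : ℝ → E}
    (hf : ∀ t ∈ I, HasDerivAt f 0 t) {t t' : ℝ} (ht : t ∈ I) (ht' : t' ∈ I) : f t = f t' := by
  have h := hI.convex.norm_image_sub_le_of_norm_hasDerivWithin_le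
    (fun s hs => (hf s hs).hasDerivWithinAt) (fun _ _ => norm_zero.le) ht' ht
  rwa [zero_mul, norm_le_zero_iff, sub_eq_zero] at h

theorem HasDerivAt.rpow_const_of_logDeriv {u : ℝ → ℝ} {a x : ℝ} (hu : HasDerivAt u (a * u x) x)
    (hx : 0 < u x) (p : ℝ) : HasDerivAt (fun t => u t ^ p) (p * a * u x ^ p) x := by
  convert hu.rpow_const (p := p) (Or.inl hx.ne') using 1
  rw [rpow_sub_one hx.ne']
  field_simp

theorem HasDerivAt.fun_mul_eq_zero_of_logDeriv_neg {f g : ℝ → ℝ} {a x : ℝ}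
    (hf : HasDerivAt f (-a * f x) x) (hg : HasDerivAt g (a * g x) x) :
    HasDerivAt (fun t => f t * g t) 0 x :=
  (hf.fun_mul hg).congr_deriv (by ring)

section GasDynamics

variable {γ b : ℝ} {R1 R2 : ℝ → ℝ} {x : ℝ}

theorem hasDerivAt_quadratic_energy (hγ : γ ≠ 1)
    (h1 : HasDerivAt R1 (-(R1 x)^2 + b * (R2 x)^2) x)
    (h2 : HasDerivAt R2 (-((γ+1)/2) * R1 x * R2 x) x) :
    HasDerivAt (fun t => (R1 t)^2 + (2*b/(γ-1)) * (R2 t)^2)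
      (-(2 * R1 x) * ((R1 x)^2 + (2*b/(γ-1)) * (R2 x)^2)) x := by
  have hγ' : γ - 1 ≠ 0 := sub_ne_zero.mpr hγ
  refine ((h1.fun_pow 2).fun_add ((h2.fun_pow 2).const_mul (2*b/(γ-1)))).congr_deriv ?_
  field_simp
  ring

theorem hasDerivAt_rpow_weight (hγ : γ + 1 ≠ 0) (hpos : 0 < R2 x)
    (h2 : HasDerivAt R2 (-((γ+1)/2) * R1 x * R2 x) x) :
    HasDerivAt (fun t => R2 t ^ (-(4/(γ+1)) : ℝ)) (2 * R1 x * R2 x ^ (-(4/(γ+1)) : ℝ)) x := by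
  have h2' : HasDerivAt R2 ((-((γ+1)/2) * R1 x) * R2 x) x := h2
  convert h2'.rpow_const_of_logDeriv hpos (-(4/(γ+1))) using 1
  field_simp
  ring

end GasDynamics

theorem first_integral_gamma_gt_one (γ b : ℝ) (hγ : 1 < γ) (I : Set ℝ)
    (hI : I.OrdConnected) (R1 R2 : ℝ → ℝ)
    (hpos : ∀ t ∈ I, 0 < R2 t)
    (h1 : ∀ t ∈ I, HasDerivAt R1 (-(R1 t)^2 + b * (R2 t)^2) t)
    (h2 : ∀ t ∈ I, HasDerivAt R2 (-((γ+1)/2) * R1 t * R2 t) t)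
    (E : ℝ → ℝ)
    (hE : E = fun t => ((R1 t)^2 + (2*b/(γ-1)) * (R2 t)^2) * (R2 t) ^ (-(4/(γ+1)) : ℝ)) :
    ∀ t ∈ I, ∀ t' ∈ I, E t = E t' := by
  intro t ht t' ht'
  refine hI.eq_of_hasDerivAt_eq_zero (f := E) (fun s hs => ?_) ht ht'
  rw [hE]
  exact HasDerivAt.fun_mul_eq_zero_of_logDeriv_neg
    (hasDerivAt_quadratic_energy hγ.ne' (h1 s hs) (h2 s hs))
    (hasDerivAt_rpow_weight (by linarith) (hpos s hs) (h2 s hs))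
end

section
/- Let γ > 1, b < 0, and let R1, R2 : [0,T) → ℝ solve R1' = -R1² + bR2², R2' = -((γ+1)/2)R1R2 with R2(0) ≠ 0 and R1(0)² + (2b/(γ-1))R2(0)² < 0. Then R1'(0) < 0 if R1(0) ≤ 0; more generally, along the solution R1 is strictly decreasing whenever R1² < |b| R2², and the quantity R1² + (2b/(γ-1))R2² is invariant in sign: it remains negative for all t in [0,T). -/
theorem sign_invariance_b_neg (γ b T : ℝ) (hγ : 1 < γ) (hb : b < 0) (hT : 0 < T)
    (R1 R2 : ℝ → ℝ)
    (h1 : ∀ t ∈ Set.Ico (0:ℝ) T, HasDerivAt R1 (-(R1 t)^2 + b * (R2 t)^2) t)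
    (h2 : ∀ t ∈ Set.Ico (0:ℝ) T, HasDerivAt R2 (-((γ+1)/2) * R1 t * R2 t) t)
    (hR20 : R2 0 ≠ 0)
    (hinit : (R1 0)^2 + (2*b/(γ-1)) * (R2 0)^2 < 0) :
    (R1 0 ≤ 0 → -(R1 0)^2 + b * (R2 0)^2 < 0) ∧
    (∀ t ∈ Set.Ico (0:ℝ) T, (R1 t)^2 < |b| * (R2 t)^2 →
      -(R1 t)^2 + b * (R2 t)^2 < 0) ∧
    (∀ t ∈ Set.Ico (0:ℝ) T, (R1 t)^2 + (2*b/(γ-1)) * (R2 t)^2 < 0) := by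
  have hγ1 : γ - 1 ≠ 0 := by linarith
  refine ⟨?_, ?_, ?_⟩
  · intro _
    have h2pos : (0:ℝ) < (R2 0)^2 := by positivity
    nlinarith [sq_nonneg (R1 0)]
  · intro t _ h
    rw [abs_of_neg hb] at h
    nlinarith [sq_nonneg (R1 t)]
  · -- energy E := R1² + (2b/(γ-1)) R2² satisfies E' = -2 R1 E
    set E : ℝ → ℝ := fun t => (R1 t)^2 + (2*b/(γ-1)) * (R2 t)^2 with hEdef
    have hE : ∀ t ∈ Set.Ico (0:ℝ) T, HasDerivAt E ((-2 * R1 t) * E t) t := by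
      intro t ht
      have hd : HasDerivAt E _ t := ((h1 t ht).fun_pow 2).add (((h2 t ht).fun_pow 2).const_mul (2*b/(γ-1)) :
        HasDerivAt (fun y => 2*b/(γ-1) * R2 y ^ 2) _ t)
      convert hd using 1
      simp only [hEdef, Nat.cast_ofNat, pow_one]
      field_simp
      ring
    intro t ht
    by_contra hle
    push_neg at hle
    have hsub : Set.Icc (0:ℝ) t ⊆ Set.Ico 0 T :=
      fun u hu => ⟨hu.1, lt_of_le_of_lt hu.2 ht.2⟩
    have hEc : ContinuousOn E (Set.Icc 0 t) :=
      fun u hu => ((hE u (hsub hu)).continuousAt).continuousWithinAt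
    have hmem : (0:ℝ) ∈ Set.Icc (E 0) (E t) := ⟨le_of_lt hinit, hle⟩
    obtain ⟨s, hs, hEs⟩ := intermediate_value_Icc ht.1 hEc hmem
    -- s ∈ Icc 0 t, E s = 0
    have hsubs : Set.Icc (0:ℝ) s ⊆ Set.Ico 0 T :=
      fun u hu => ⟨hu.1, lt_of_le_of_lt (hu.2.trans hs.2) ht.2⟩
    have hR1c : ContinuousOn R1 (Set.Icc 0 s) :=
      fun u hu => (h1 u (hsubs hu)).continuousAt.continuousWithinAt
    obtain ⟨C, hC⟩ := (isCompact_Icc).exists_bound_of_continuousOn hR1c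
    set K : NNReal := Real.toNNReal (2 * C) with hKdef
    set v : ℝ → ℝ → ℝ := fun u y => (-2 * R1 (min (max u 0) s)) * y with hvdef
    have hclamp : ∀ u, min (max u 0) s ∈ Set.Icc (0:ℝ) s :=
      fun u => ⟨le_min (le_max_right u 0) hs.1, min_le_right _ _⟩
    have hv : ∀ u, LipschitzOnWith K (v u) (Set.univ : Set ℝ) := by
      intro u
      apply LipschitzWith.lipschitzOnWith
      apply LipschitzWith.of_dist_le_mul
      intro x y
      have habs : |(-2 * R1 (min (max u 0) s))| ≤ (K:ℝ) := by
        rw [abs_mul]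
        have h1' : ‖R1 (min (max u 0) s)‖ ≤ C := hC _ (hclamp u)
        rw [Real.norm_eq_abs] at h1'
        have : (K:ℝ) = max (2*C) 0 := by rw [hKdef, Real.coe_toNNReal']
        rw [this]
        have : |(-2:ℝ)| = 2 := by norm_num
        rw [this]
        have h2C : 2 * |R1 (min (max u 0) s)| ≤ 2 * C := by linarith
        exact h2C.trans (le_max_left _ _)
      simp only [hvdef, Real.dist_eq, ← mul_sub]
      rw [abs_mul]
      exact mul_le_mul_of_nonneg_right habs (abs_nonneg _)
    have huniq : Set.EqOn E (fun _ => (0:ℝ)) (Set.Icc 0 s) := by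
      apply ODE_solution_unique_of_mem_Icc_left (fun u _ => hv u)
      · exact fun u hu => ((hE u (hsubs hu)).continuousAt).continuousWithinAt
      · intro u hu
        have hcl : min (max u 0) s = u := by
          rw [max_eq_left hu.1.le, min_eq_left hu.2]
        have := (hE u (hsubs ⟨hu.1.le, hu.2⟩)).hasDerivWithinAt (s := Set.Iic u)
        simpa [hvdef, hcl] using this
      · exact fun u _ => Set.mem_univ _
      · exact continuousOn_const
      · intro u hu
        simpa [hvdef] using (hasDerivWithinAt_const u (Set.Iic u) (0:ℝ))
      · exact fun u _ => Set.mem_univ _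
      · exact hEs
    have h0 : E 0 = 0 := huniq ⟨le_refl 0, hs.1⟩
    rw [hEdef] at h0
    simp only at h0
    linarith
end

section
/- In the isentropic case (initial pressure p₀ = ρ₀^γ/γ with γ > 1), the quantities of the main theorem satisfy K(x) = 0 and b(x) = -(γ-1)/2 < 0, and the condition 'R1 ≥ 0 and R1² + (2b/(γ-1))R2² ≥ 0' with R1 = v₀' and R2 = p₀'/√(γρ₀p₀) is equivalent to: v₀'(x) ≥ ρ₀(x)^{(γ-3)/2}·|ρ₀'(x)|, i.e., both v₀' - ρ₀^{(γ-3)/2}ρ₀' ≥ 0 and v₀' + ρ₀^{(γ-3)/2}ρ₀' ≥ 0. -/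
open Real

theorem isentropic_case_reduction (γ r dr dv : ℝ) (hγ : 1 < γ) (hr : 0 < r)
    (p dp K b R1 R2 : ℝ)
    (hp : p = r ^ γ / γ)
    (hdp : dp = r ^ (γ - 1) * dr)
    (hK : K = γ * p * dr / (2 * r * dp) - 1/2)
    (hb : b = -(γ-1)/2 + K)
    (hR1 : R1 = dv) (hR2 : R2 = dp / Real.sqrt (γ * r * p)) :
    (dr ≠ 0 → K = 0) ∧
    (dr ≠ 0 → b = -(γ-1)/2 ∧ b < 0) ∧
    ((R1 ≥ 0 ∧ R1^2 + (2*b/(γ-1)) * R2^2 ≥ 0) ↔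
      (dv - r ^ ((γ-3)/2) * dr ≥ 0 ∧ dv + r ^ ((γ-3)/2) * dr ≥ 0)) := by
  have hγ0 : γ ≠ 0 := by linarith
  have hγ1 : γ - 1 ≠ 0 := by linarith
  have hr0 : r ≠ 0 := ne_of_gt hr
  have hrγpos : (0:ℝ) < r ^ γ := Real.rpow_pos_of_pos hr γ
  have hpγ : γ * p = r ^ γ := by rw [hp]; field_simp
  have hppos : 0 < p := by rw [hp]; positivity
  have hr1 : r * r ^ (γ - 1) = r ^ γ := by
    nth_rewrite 1 [← Real.rpow_one r]
    rw [← Real.rpow_add hr]; ring_nf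
  have hK0 : dr ≠ 0 → K = 0 := by
    intro hdr
    rw [hK, hdp, show γ * p * dr = r ^ γ * dr by rw [hpγ],
      show 2 * r * (r ^ (γ - 1) * dr) = 2 * (r * r ^ (γ - 1)) * dr by ring, hr1]
    field_simp
    ring
  refine ⟨hK0, fun hdr => ⟨by rw [hb, hK0 hdr]; ring, by rw [hb, hK0 hdr]; linarith⟩, ?_⟩
  have hs : 0 < r ^ ((γ-3)/2) := Real.rpow_pos_of_pos hr _
  have hs2 : (r ^ ((γ-3)/2))^2 = r ^ (γ-3) := by
    rw [sq, ← Real.rpow_add hr]; ring_nf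
  by_cases hdr : dr = 0
  · subst hdr
    have hR2' : R2 = 0 := by rw [hR2, hdp]; simp
    rw [hR1, hR2']
    constructor
    · rintro ⟨h1, _⟩; constructor <;> simpa using h1
    · rintro ⟨h1, _⟩
      refine ⟨by simpa using h1, ?_⟩
      simp; positivity
  · have hbb : b = -(γ-1)/2 := by rw [hb, hK0 hdr]; ring
    have hcoef : 2 * b / (γ - 1) = -1 := by rw [hbb]; field_simp
    have hgrp : γ * r * p = r ^ (γ+1) := by
      rw [show γ * r * p = r * (γ * p) by ring, hpγ, Real.rpow_add hr, Real.rpow_one]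
      ring
    have hgrppos : 0 < γ * r * p := by rw [hgrp]; exact Real.rpow_pos_of_pos hr _
    have hR2sq : R2^2 = r ^ (γ-3) * dr^2 := by
      rw [hR2, div_pow, Real.sq_sqrt hgrppos.le, hdp, mul_pow, hgrp,
        ← Real.rpow_natCast (r ^ (γ-1)) 2, ← Real.rpow_mul hr.le,
        div_eq_iff (ne_of_gt (Real.rpow_pos_of_pos hr (γ+1))),
        show r ^ (γ-3) * dr ^ 2 * r ^ (γ+1) = r ^ (γ-3) * r ^ (γ+1) * dr ^ 2 by ring,
        ← Real.rpow_add hr]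
      norm_num
      ring_nf
      exact Or.inl trivial
    rw [hR1, hR2sq, hcoef, ← hs2]
    constructor
    · rintro ⟨h1, h2⟩
      constructor <;> nlinarith [hs, sq_nonneg (dv + r ^ ((γ-3)/2) * dr), sq_nonneg (dv - r ^ ((γ-3)/2) * dr)]
    · rintro ⟨h1, h2⟩
      exact ⟨by linarith, by nlinarith⟩
end
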